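/- The holomorph Hol(Z/4Z × Z/8Z) contains no element of order 16. -/

import Mathlib

/-- The multiplicative group structure on `AddAut A` (composition), as in the older Mathlib. -/
instance AddAut.group (A : Type*) [Add A] : Group (AddAut A) where
  mul g h := AddEquiv.trans h g
  one := AddEquiv.refl _
  inv := AddEquiv.symm
  mul_assoc _ _ _ := rfl
  one_mul _ := rfl
  mul_one _ := rfl
  inv_mul_cancel := AddEquiv.self_trans_symm

/-- The natural action of `AddAut N` on `Multiplicative N`. -/
def holPhi (N : Type) [AddCommGroup N] : AddAut N →* MulAut (Multiplicative N) where
  toFun f := AddEquiv.toMultiplicative f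
  map_one' := by ext x; rfl
  map_mul' f g := by ext x; rfl

/-- The holomorph of an abelian group `N`, i.e. the semidirect product `N ⋊ Aut(N)`. -/
abbrev Hol (N : Type) [AddCommGroup N] :=
  SemidirectProduct (Multiplicative N) (AddAut N) (holPhi N)

/-- The action of the holomorph on `N`: `(v, A) • x = v + A x`. -/
def holSmul {N : Type} [AddCommGroup N] (g : Hol N) (x : N) : N :=
  (Multiplicative.toAdd g.left) + g.right x

/-- A subgroup of `Hol N` is regular if its action on `N` is simply transitive. -/
def IsRegularSubgroup {N : Type} [AddCommGroup N] (G : Subgroup (Hol N)) : Prop :=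
  ∀ x y : N, ∃! g : G, holSmul (g : Hol N) x = y

/-!
Write `g = (v, A)`, so that `g ^ n = (∑ i < n, Aⁱ v, Aⁿ)`. Put `N[4] = {x | 4 • x = 0}`.
As `4 • N` has at most two elements, `A` fixes it pointwise, i.e. `A` is trivial on `N ⧸ N[4]`;
as `N[4] ⧸ 2 • N` has at most two elements, `A` is trivial on it as well, so `A² ≡ 1` modulo `2 • N`.
Squaring doubles the modulus, so `A⁴ ≡ 1` modulo `4 • N` and `A⁸ = 1`. Finally
`∑ i < 8, Aⁱ = (1 + A)(1 + A²)(1 + A⁴)`, where `1 + A⁴` maps `N` into `2 • N`, `1 + A²` maps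
`2 • N` into `4 • N`, and `1 + A` kills `4 • N`. So `g ^ 8 = 1` for every abelian group `N` with
`8 • N = 0` in which `4 • N` and `N[4] ⧸ 2 • N` have at most two elements, e.g. `ℤ/4 × ℤ/8`.
-/

open Finset

lemma sum_range_eight_pow {R : Type*} [Ring R] (a : R) :
    ∑ i ∈ range 8, a ^ i = (1 + a) * ((1 + a ^ 2) * (1 + a ^ 4)) := by
  simp only [sum_range_succ, sum_range_zero]
  noncomm_ring

namespace Module.End

variable {N : Type} [AddCommGroup N]

def CongrOneMod (f : Module.End ℤ N) (m : ℕ) : Prop :=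
  ∀ x, ∃ u, f x = x + m • u

lemma CongrOneMod.sq {f : Module.End ℤ N} {m : ℕ} (hf : f.CongrOneMod m) (hm : Even m) :
    (f ^ 2).CongrOneMod (2 * m) := by
  obtain ⟨r, rfl⟩ := hm
  intro x
  obtain ⟨u, hu⟩ := hf x
  obtain ⟨w, hw⟩ := hf u
  refine ⟨u + r • w, ?_⟩
  rw [pow_two, mul_apply, hu, map_add, map_nsmul, hu, hw]
  module

lemma CongrOneMod.eq_one {f : Module.End ℤ N} {m : ℕ} (hf : f.CongrOneMod m)
    (hm : ∀ x : N, m • x = 0) : f = 1 := by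
  ext x
  obtain ⟨u, hu⟩ := hf x
  rw [hu, hm, add_zero, one_apply]

lemma CongrOneMod.exists_add_apply_nsmul {f : Module.End ℤ N} {c : ℕ} (hf : f.CongrOneMod c)
    (hc : Even c) (m : ℕ) (x : N) : ∃ w, (1 + f) (m • x) = (2 * m) • w := by
  obtain ⟨r, rfl⟩ := hc
  obtain ⟨u, hu⟩ := hf x
  refine ⟨x + r • u, ?_⟩
  rw [LinearMap.add_apply, one_apply, map_nsmul, hu]
  module

lemma sum_range_eight_pow_apply_eq_zero {f : Module.End ℤ N} (h8 : ∀ x : N, 8 • x = 0)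
    (hf : ∀ x, f (4 • x) = 4 • x) (hf2 : (f ^ 2).CongrOneMod 2) (hf4 : (f ^ 4).CongrOneMod 4)
    (v : N) : (∑ i ∈ range 8, f ^ i) v = 0 := by
  obtain ⟨w₁, hw₁⟩ := hf4.exists_add_apply_nsmul (by decide) 1 v
  obtain ⟨w₂, hw₂⟩ := hf2.exists_add_apply_nsmul even_two 2 w₁
  rw [one_nsmul] at hw₁
  calc (∑ i ∈ range 8, f ^ i) v
      = (1 + f) ((1 + f ^ 2 : Module.End ℤ N) ((1 + f ^ 4 : Module.End ℤ N) v)) := by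
        rw [sum_range_eight_pow]; rfl
    _ = (1 + f) (4 • w₂) := by rw [hw₁, hw₂]
    _ = 8 • w₂ := by rw [LinearMap.add_apply, one_apply, hf, ← add_nsmul]
    _ = 0 := h8 w₂

end Module.End

namespace AddAut

variable {N : Type} [AddCommGroup N]

def toEnd : AddAut N →* Module.End ℤ N where
  toFun A := A.toIntLinearEquiv.toLinearMap
  map_one' := rfl
  map_mul' _ _ := rfl

lemma toEnd_injective : Function.Injective (toEnd : AddAut N →* Module.End ℤ N) :=
  fun _ _ h => AddEquiv.ext (LinearMap.congr_fun h)

lemma apply_four_nsmul (h4 : ∀ x y : N, 4 • x ≠ 0 → 4 • y ≠ 0 → 4 • x = 4 • y)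
    (A : AddAut N) (x : N) : A (4 • x) = 4 • x := by
  by_cases hx : 4 • x = 0
  · rw [hx, map_zero]
  · rw [map_nsmul]
    exact h4 _ _ (by rwa [← map_nsmul, map_ne_zero_iff _ A.injective]) hx

lemma even_apply_sub_self
    (h2 : ∀ x y : N, 4 • x = 0 → 4 • y = 0 → ¬Even x → ¬Even y → Even (x - y))
    (A : AddAut N) {y : N} (hy : 4 • y = 0) : Even (A y - y) := by
  by_cases hy₂ : Even y
  · exact (hy₂.map A).sub hy₂
  · have hAy : ¬Even (A y) := fun h => hy₂ (by simpa using h.map A.symm)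
    exact h2 _ _ (by rw [← map_nsmul, hy, map_zero]) hy hAy hy₂

lemma congrOneMod_toEnd_sq (h4 : ∀ x y : N, 4 • x ≠ 0 → 4 • y ≠ 0 → 4 • x = 4 • y)
    (h2 : ∀ x y : N, 4 • x = 0 → 4 • y = 0 → ¬Even x → ¬Even y → Even (x - y))
    (A : AddAut N) : (toEnd A ^ 2).CongrOneMod 2 := by
  intro x
  have hy : 4 • (A x - x) = 0 := by
    rw [nsmul_sub, ← map_nsmul, A.apply_four_nsmul h4, sub_self]
  obtain ⟨u, hu⟩ := (even_iff_exists_two_nsmul _).1 (A.even_apply_sub_self h2 hy)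
  have hAA : A (A x) = A x + (A x - x) + 2 • u := by
    rw [← hu, map_sub]
    abel
  refine ⟨u + (A x - x), ?_⟩
  change A (A x) = _
  rw [hAA]
  module

end AddAut

lemma SemidirectProduct.right_pow {N G : Type*} [Group N] [Group G] {φ : G →* MulAut N}
    (g : N ⋊[φ] G) (n : ℕ) : (g ^ n).right = g.right ^ n :=
  map_pow rightHom g n

namespace Hol

variable {N : Type} [AddCommGroup N]

lemma toAdd_left_pow (g : Hol N) (n : ℕ) :
    Multiplicative.toAdd (g ^ n).left =
      (∑ i ∈ range n, AddAut.toEnd g.right ^ i) (Multiplicative.toAdd g.left) := by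
  induction n with
  | zero => rfl
  | succ n ih =>
    rw [pow_succ, SemidirectProduct.mul_left, toAdd_mul, ih, sum_range_succ,
      LinearMap.add_apply, SemidirectProduct.right_pow, ← map_pow]
    rfl

theorem pow_eight_eq_one (h8 : ∀ x : N, 8 • x = 0)
    (h4 : ∀ x y : N, 4 • x ≠ 0 → 4 • y ≠ 0 → 4 • x = 4 • y)
    (h2 : ∀ x y : N, 4 • x = 0 → 4 • y = 0 → ¬Even x → ¬Even y → Even (x - y))
    (g : Hol N) : g ^ 8 = 1 := by
  set f := AddAut.toEnd g.right
  have hf2 : (f ^ 2).CongrOneMod 2 := g.right.congrOneMod_toEnd_sq h4 h2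
  have hf4 : (f ^ 4).CongrOneMod 4 := by simpa only [← pow_mul] using hf2.sq even_two
  have hf8 : (f ^ 8).CongrOneMod 8 := by simpa only [← pow_mul] using hf4.sq (by decide)
  refine SemidirectProduct.ext ?_ ?_
  · rw [SemidirectProduct.one_left, ← toAdd_eq_zero, toAdd_left_pow]
    exact Module.End.sum_range_eight_pow_apply_eq_zero h8 (g.right.apply_four_nsmul h4) hf2 hf4 _
  · rw [SemidirectProduct.right_pow, SemidirectProduct.one_right]
    exact AddAut.toEnd_injective (by rw [map_pow, hf8.eq_one h8, map_one])

end Hol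

/-- Lemma 7.1: the holomorph of `C₄ × C₈` has no element of order `16`. -/
theorem no_element_of_order_sixteen_in_hol_C4_x_C8 (g : Hol (ZMod 4 × ZMod 8)) :
    orderOf g ≠ 16 := by
  have h8 : ∀ x : ZMod 4 × ZMod 8, 8 • x = 0 := by decide
  have h4 : ∀ x y : ZMod 4 × ZMod 8, 4 • x ≠ 0 → 4 • y ≠ 0 → 4 • x = 4 • y := by decide
  have h2 : ∀ x y : ZMod 4 × ZMod 8, 4 • x = 0 → 4 • y = 0 → ¬Even x → ¬Even y →
      Even (x - y) := by
    unfold Even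
    decide
  have := Nat.le_of_dvd (by norm_num) (orderOf_dvd_of_pow_eq_one (Hol.pow_eight_eq_one h8 h4 h2 g))
  omega
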